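/- Let p3, p5 ∈ ℂ[v,y] ⊂ S, q3, q5 ∈ ℂ[v] ⊂ S and k3, k5 ∈ ℂ. Set E3 = p3·t·∂_y + (1 + q3·t)∂_v + k3·t·∂_t and E5 = (2y + p5·t)∂_y + (−v + q5·t)∂_v + k5·t·∂_t. If [E3,E5] ≡ −E3 (mod t²), then k3 = 0. -/

import Mathlib

/-! Both `E3` and `E5` act on `t` by scalars (`k3`, `k5`), so their bracket kills `t`. Hence the
`∂_t`-coefficient of `[E3,E5] + E3` is `k3·t`, which lies in `(t²)` only when `k3 = 0`. -/

open MvPolynomial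

noncomputable section

/-- `S = ℂ[v,y,t]` with `v = X 0`, `y = X 1`, `t = X 2`. -/
abbrev S : Type := MvPolynomial (Fin 3) ℂ

/-- The variable `v`. -/ def V : S := X 0
/-- The variable `y`. -/ def Y : S := X 1
/-- The variable `t`. -/ def T : S := X 2

/-- The derivation `f ∂_y + g ∂_v + h ∂_t` of `S = ℂ[v,y,t]`, determined by
`y ↦ f`, `v ↦ g`, `t ↦ h`. -/
def der (f g h : S) : Derivation ℂ S S :=
  MvPolynomial.mkDerivation ℂ ![g, f, h]

/-- The inclusion `ℂ[v,y] ⊂ S` (where in `ℂ[v,y]` the variable `X 0` is `v`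
and `X 1` is `y`). -/
def ι2 : MvPolynomial (Fin 2) ℂ →ₐ[ℂ] S := aeval ![V, Y]

/-- The inclusion `ℂ[v] ⊂ S`. -/
def ι1 : Polynomial ℂ →ₐ[ℂ] S := Polynomial.aeval V

/-- `D ≡ D' (mod t²)`: the difference sends `y`, `v`, `t` into the ideal `(t²)`. -/
def ModT2 (D D' : Derivation ℂ S S) : Prop :=
  ∀ i : Fin 3, (D - D') (X i) ∈ Ideal.span {T ^ 2}

theorem MvPolynomial.C_mul_X_mem_span_X_sq_iff {R σ : Type*} [CommSemiring R] (c : R) (i : σ) :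
    C c * X i ∈ Ideal.span {(X i : MvPolynomial σ R) ^ 2} ↔ c = 0 := by
  refine ⟨fun hc => ?_, fun hc => by simp [hc]⟩
  obtain ⟨q, hq⟩ := Ideal.mem_span_singleton'.mp hc
  have hcoeff := congrArg (coeff (Finsupp.single i 1)) hq
  rw [X_pow_eq_monomial, mul_comm, coeff_monomial_mul'] at hcoeff
  simpa [coeff_C_mul, coeff_X] using hcoeff.symm

theorem Derivation.commutator_apply_eq_zero_of_apply_eq_smul {R A : Type*} [CommRing R]
    [CommRing A] [Algebra R A] {D₁ D₂ : Derivation R A A} {x : A} {a b : R}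
    (h₁ : D₁ x = a • x) (h₂ : D₂ x = b • x) : ⁅D₁, D₂⁆ x = 0 := by
  rw [Derivation.commutator_apply, h₁, h₂, map_smul, map_smul, h₁, h₂, smul_comm, sub_self]

theorem der_apply_T (f g h : S) : der f g h T = h :=
  mkDerivation_X ℂ _ 2

theorem bracket_E3_E5 (p3 p5 : MvPolynomial (Fin 2) ℂ) (q3 q5 : Polynomial ℂ)
    (k3 k5 : ℂ) (E3 E5 : Derivation ℂ S S)
    (hE3 : E3 = der (ι2 p3 * T) (1 + ι1 q3 * T) (C k3 * T))
    (hE5 : E5 = der (2 * Y + ι2 p5 * T) (-V + ι1 q5 * T) (C k5 * T))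
    (h : ModT2 ⁅E3, E5⁆ (-E3)) : k3 = 0 := by
  have hE3T : E3 T = k3 • T := by rw [hE3, der_apply_T, C_mul']
  have hE5T : E5 T = k5 • T := by rw [hE5, der_apply_T, C_mul']
  have hbracket : ⁅E3, E5⁆ T = 0 :=
    Derivation.commutator_apply_eq_zero_of_apply_eq_smul hE3T hE5T
  have hT : (⁅E3, E5⁆ - -E3) T = C k3 * T := by
    rw [Derivation.sub_apply, hbracket, Derivation.neg_apply, hE3T, C_mul']
    abel
  have hmod : C k3 * T ∈ Ideal.span {T ^ 2} := hT ▸ h 2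
  exact (C_mul_X_mem_span_X_sq_iff k3 2).mp hmod

end
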